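/- Let A ⊆ ℕ, let S ⊆ ℕ be multiplicatively F-syndetic for a nonempty finite set F ⊂ ℕ, let 𝔖 be a dilation invariant finite system of polynomial equations with rational coefficients, and let r ∈ ℕ. If 𝔖 is (|F|·r)-regular over A, then 𝔖 is r-regular over S ∩ (F·A), where F·A := {ta : t ∈ F, a ∈ A}. -/

import Mathlib

/-!
Colour `n` by the pair `(t n, χ (n * t n))`, where `t n ∈ F` is chosen with `n * t n ∈ S`.
This is a `|F| · r`-colouring, so it has a monochromatic solution `x` in `A`; all its
coordinates share the same `T = t (x i)`, and by dilation invariance `T • x` is a solution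
which lies in `S ∩ F·A` and is `χ`-monochromatic.
-/

open MvPolynomial

/-- `x : ℕ^s` is a solution of the system given by polynomials `p j`:
all entries are positive integers and every polynomial vanishes at `x`. -/
def IsSolution {s k : ℕ} (p : Fin k → MvPolynomial (Fin s) ℚ) (x : Fin s → ℕ) : Prop :=
  (∀ i, 0 < x i) ∧ ∀ j, eval (fun i => (x i : ℚ)) (p j) = 0

/-- A tuple is non-trivial if its coordinates are not all equal. -/
def IsNontrivial {s : ℕ} (x : Fin s → ℕ) : Prop :=
  ∃ i j, x i ≠ x j

/-- The system is dilation invariant: rational solutions are preserved by dilations. -/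
def DilationInvariant {s k : ℕ} (p : Fin k → MvPolynomial (Fin s) ℚ) : Prop :=
  ∀ x : Fin s → ℚ, (∀ j, eval x (p j) = 0) →
    ∀ lam : ℚ, ∀ j, eval (fun i => lam * x i) (p j) = 0

/-- The system is `r`-regular over `X ⊆ ℕ`: every `r`-colouring of ℕ admits a
monochromatic non-trivial solution with all coordinates in `X`. -/
def RRegularOver {s k : ℕ} (p : Fin k → MvPolynomial (Fin s) ℚ) (X : Set ℕ) (r : ℕ) : Prop :=
  ∀ χ : ℕ → Fin r, ∃ x : Fin s → ℕ, IsSolution p x ∧ IsNontrivial x ∧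
    (∀ i, x i ∈ X) ∧ ∀ i j, χ (x i) = χ (x j)

/-- The system is partition regular over `X`: `r`-regular over `X` for every `r`. -/
def PartitionRegularOver {s k : ℕ} (p : Fin k → MvPolynomial (Fin s) ℚ) (X : Set ℕ) : Prop :=
  ∀ r : ℕ, RRegularOver p X r

/-- `S` is multiplicatively `F`-syndetic: every positive `n` has some `t ∈ F` with `n*t ∈ S`. -/
def MultSyndeticWith (F : Finset ℕ) (S : Set ℕ) : Prop :=
  ∀ n : ℕ, 0 < n → ∃ t ∈ F, n * t ∈ S

/-- `S` is multiplicatively syndetic: multiplicatively `F`-syndetic for some nonempty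
finite set `F` of positive integers. -/
def MultSyndetic (S : Set ℕ) : Prop :=
  ∃ F : Finset ℕ, F.Nonempty ∧ (∀ t ∈ F, 0 < t) ∧ MultSyndeticWith F S

/-- `T` is multiplicatively thick: every finite set of positive integers has a dilate inside `T`. -/
def MultThick (T : Set ℕ) : Prop :=
  ∀ F : Finset ℕ, (∀ t ∈ F, 0 < t) → ∃ n : ℕ, 0 < n ∧ ∀ t ∈ F, n * t ∈ T

variable {s k : ℕ} {p : Fin k → MvPolynomial (Fin s) ℚ} {x : Fin s → ℕ}

theorem IsSolution.mul_right (hdil : DilationInvariant p) (hx : IsSolution p x) {c : ℕ}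
    (hc : 0 < c) : IsSolution p (fun i => x i * c) :=
  ⟨fun i => Nat.mul_pos (hx.1 i) hc, fun j => by
    simpa only [Nat.cast_mul, mul_comm] using hdil _ hx.2 c j⟩

theorem IsNontrivial.mul_right (hx : IsNontrivial x) {c : ℕ} (hc : 0 < c) :
    IsNontrivial (fun i => x i * c) :=
  let ⟨i, j, hij⟩ := hx
  ⟨i, j, fun h => hij (Nat.eq_of_mul_eq_mul_right hc h)⟩

theorem RRegularOver.exists_monochromatic {X : Set ℕ} {κ : Type*} [Fintype κ]
    (h : RRegularOver p X (Fintype.card κ)) (c : ℕ → κ) :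
    ∃ x : Fin s → ℕ, IsSolution p x ∧ IsNontrivial x ∧
      (∀ i, x i ∈ X) ∧ ∀ i j, c (x i) = c (x j) := by
  obtain ⟨x, hx, hnt, hX, hmono⟩ := h (Fintype.equivFin κ ∘ c)
  exact ⟨x, hx, hnt, hX, fun i j => (Fintype.equivFin κ).injective (hmono i j)⟩

theorem MultSyndeticWith.exists_selector {F : Finset ℕ} {S : Set ℕ} (hS : MultSyndeticWith F S) :
    ∃ t : ℕ → F, ∀ n, 0 < n → n * t n ∈ S := by
  choose t htF htS using hS
  refine ⟨fun n => if hn : 0 < n then ⟨t n hn, htF n hn⟩ else ⟨t 1 one_pos, htF 1 one_pos⟩,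
    fun n hn => ?_⟩
  simpa only [dif_pos hn] using htS n hn

theorem syndetic_contains_PR_general {s k : ℕ}
    (p : Fin k → MvPolynomial (Fin s) ℚ) (hdil : DilationInvariant p)
    (A S : Set ℕ) (F : Finset ℕ) (hFpos : ∀ t ∈ F, 0 < t)
    (hS : MultSyndeticWith F S) (r : ℕ)
    (hreg : RRegularOver p A (F.card * r)) :
    RRegularOver p (S ∩ {m : ℕ | ∃ t ∈ F, ∃ a ∈ A, m = t * a}) r := by
  intro χ
  obtain ⟨t, htS⟩ := hS.exists_selector
  have hcard : Fintype.card (F × Fin r) = F.card * r := by simp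
  obtain ⟨x, hx, hnt, hxA, hmono⟩ :=
    (hcard ▸ hreg).exists_monochromatic fun n => (t n, χ (n * t n))
  obtain ⟨i₀, -⟩ := id hnt
  have ht : ∀ i, t (x i) = t (x i₀) := fun i => congrArg Prod.fst (hmono i i₀)
  have hT : 0 < (t (x i₀) : ℕ) := hFpos _ (t _).2
  refine ⟨fun i => x i * t (x i₀), hx.mul_right hdil hT, hnt.mul_right hT,
    fun i => ⟨?_, _, (t _).2, x i, hxA i, mul_comm _ _⟩, fun i j => ?_⟩
  · simpa only [ht i] using htS _ (hx.1 i)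
  · simpa only [ht i, ht j] using congrArg Prod.snd (hmono i j)

/-- Syndetic sets contain partition regular configurations:
if a dilation invariant system is `(|F|·r)`-regular over `A`, then it is
`r`-regular over `S ∩ (F·A)` for any multiplicatively `F`-syndetic set `S`. -/
theorem syndetic_contains_PR {s k : ℕ}
    (p : Fin k → MvPolynomial (Fin s) ℚ) (hdil : DilationInvariant p)
    (A S : Set ℕ) (F : Finset ℕ) (hFne : F.Nonempty) (hFpos : ∀ t ∈ F, 0 < t)
    (hS : MultSyndeticWith F S) (r : ℕ)
    (hreg : RRegularOver p A (F.card * r)) :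
    RRegularOver p (S ∩ {m : ℕ | ∃ t ∈ F, ∃ a ∈ A, m = t * a}) r :=
  syndetic_contains_PR_general p hdil A S F hFpos hS r hreg
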